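/- arXiv:1201.0544 — 2 statements merged into one kernel-verified Lean document; each statement's English description precedes it below -/
import Mathlib

section
/- Let K and L be convex bodies in ℝⁿ containing the origin in their interiors. Then K \ L = −(L \ K) if and only if for every unit vector ξ the unordered pairs {ρ_K(ξ), ρ_K(−ξ)} and {ρ_L(ξ), ρ_L(−ξ)} coincide. -/
open Set

/-- The radial function of a body `K` (containing the origin in its interior):
`ρ_K(ξ) = sup {r > 0 : r • ξ ∈ K}`. -/
noncomputable def radial {n : ℕ} (K : Set (EuclideanSpace ℝ (Fin n)))
    (ξ : EuclideanSpace ℝ (Fin n)) : ℝ :=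
  sSup {r : ℝ | 0 < r ∧ r • ξ ∈ K}

lemma radial_spec {n : ℕ} {K : Set (EuclideanSpace ℝ (Fin n))}
    (hKc : IsCompact K) (hKv : Convex ℝ K)
    (hK0 : (0 : EuclideanSpace ℝ (Fin n)) ∈ interior K)
    {ξ : EuclideanSpace ℝ (Fin n)} (hξ : ‖ξ‖ = 1) :
    0 < radial K ξ ∧ ∀ r : ℝ, 0 < r → (r • ξ ∈ K ↔ r ≤ radial K ξ) := by
  obtain ⟨ε, hε, hball⟩ := Metric.mem_nhds_iff.mp (mem_interior_iff_mem_nhds.mp hK0)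
  have h0K : (0 : EuclideanSpace ℝ (Fin n)) ∈ K := interior_subset hK0
  set S : Set ℝ := {r : ℝ | 0 < r ∧ r • ξ ∈ K} with hS
  have hmem : ε / 2 ∈ S := by
    refine ⟨by linarith, hball ?_⟩
    rw [Metric.mem_ball, dist_zero_right, norm_smul, hξ]
    rw [Real.norm_eq_abs, abs_of_pos (by linarith)]
    linarith
  obtain ⟨M, hM⟩ := isBounded_iff_forall_norm_le.mp hKc.isBounded
  have hbdd : BddAbove S := by
    refine ⟨M, fun r hr => ?_⟩
    have := hM _ hr.2
    rwa [norm_smul, hξ, mul_one, Real.norm_eq_abs, abs_of_pos hr.1] at this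
  set S' : Set ℝ := Set.Ici 0 ∩ (fun r : ℝ => r • ξ) ⁻¹' K with hS'
  have hS'closed : IsClosed S' :=
    isClosed_Ici.inter (hKc.isClosed.preimage (continuous_id.smul continuous_const))
  have hSsub : S ⊆ S' := fun r hr => ⟨le_of_lt hr.1, hr.2⟩
  have hbdd' : BddAbove S' := by
    refine ⟨M, fun r hr => ?_⟩
    have := hM _ hr.2
    rwa [norm_smul, hξ, mul_one, Real.norm_eq_abs, abs_of_nonneg hr.1] at this
  have hsup' : sSup S' ∈ S' := hS'closed.csSup_mem ⟨_, hSsub hmem⟩ hbdd'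
  have hle : ε / 2 ≤ sSup S' := le_csSup hbdd' (hSsub hmem)
  have hsup'S : sSup S' ∈ S := ⟨by linarith, hsup'.2⟩
  have heq : radial K ξ = sSup S' :=
    le_antisymm (csSup_le ⟨_, hmem⟩ fun r hr => le_csSup hbdd' (hSsub hr))
      (le_csSup hbdd hsup'S)
  have hpos : 0 < radial K ξ := heq ▸ hsup'S.1
  refine ⟨hpos, fun r hr => ⟨fun hrK => le_csSup hbdd ⟨hr, hrK⟩, fun hrle => ?_⟩⟩
  have hmemK : radial K ξ • ξ ∈ K := by rw [heq]; exact hsup'S.2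
  have h1 : r • ξ = (r / radial K ξ) • (radial K ξ • ξ) := by
    rw [smul_smul, div_mul_cancel₀ _ (ne_of_gt hpos)]
  rw [h1]
  exact hKv.smul_mem_of_zero_mem h0K hmemK
    ⟨le_of_lt (div_pos hr hpos), (div_le_one hpos).mpr hrle⟩

lemma interval_dichotomy {a b a' b' : ℝ} (ha : 0 < a) (hb : 0 < b) (ha' : 0 < a')
    (hb' : 0 < b')
    (H : ∀ r : ℝ, 0 < r → (a < r ∧ r ≤ b ↔ a' < r ∧ r ≤ b')) :
    (b ≤ a ∧ b' ≤ a') ∨ (a = a' ∧ b = b') := by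
  by_cases hab : b ≤ a
  · left
    refine ⟨hab, ?_⟩
    by_contra hc
    push_neg at hc
    have := (H b' hb').mpr ⟨hc, le_rfl⟩
    linarith [this.1, this.2]
  · push_neg at hab
    right
    have h1 := (H b hb).mp ⟨hab, le_rfl⟩
    have h2 := (H b' hb').mpr ⟨by linarith [h1.1, h1.2], le_rfl⟩
    have hbb : b = b' := le_antisymm h1.2 h2.2
    refine ⟨?_, hbb⟩
    rcases lt_trichotomy a a' with h | h | h
    · exfalso
      have hrpos : 0 < (a + min a' b) / 2 := by
        have : 0 < min a' b := lt_min ha' hb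
        linarith
      have hr1 : a < (a + min a' b) / 2 := by
        have : a < min a' b := lt_min h hab
        linarith
      have hr2 : (a + min a' b) / 2 < min a' b := by
        have : a < min a' b := lt_min h hab
        linarith
      have := (H _ hrpos).mp ⟨hr1, le_trans (le_of_lt hr2) (min_le_right _ _)⟩
      have := this.1
      have : min a' b ≤ a' := min_le_left _ _
      linarith
    · exact h
    · exfalso
      have hrpos : 0 < (a' + a) / 2 := by linarith
      have := (H _ hrpos).mpr ⟨by linarith, by nlinarith [le_of_lt (lt_of_lt_of_le h (le_of_lt hab)), hbb]⟩
      linarith [this.1]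

theorem diff_symm_iff_radial_pairs_eq {n : ℕ} (K L : Set (EuclideanSpace ℝ (Fin n)))
    (hKc : IsCompact K) (hKv : Convex ℝ K)
    (hK0 : (0 : EuclideanSpace ℝ (Fin n)) ∈ interior K)
    (hLc : IsCompact L) (hLv : Convex ℝ L)
    (hL0 : (0 : EuclideanSpace ℝ (Fin n)) ∈ interior L) :
    K \ L = -(L \ K) ↔
      ∀ ξ : EuclideanSpace ℝ (Fin n), ‖ξ‖ = 1 →
        ({radial K ξ, radial K (-ξ)} : Set ℝ) = {radial L ξ, radial L (-ξ)} := by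
  constructor
  · intro h ξ hξ
    have hξ' : ‖-ξ‖ = 1 := by rwa [norm_neg]
    obtain ⟨hKpos, hKiff⟩ := radial_spec hKc hKv hK0 hξ
    obtain ⟨hLpos, hLiff⟩ := radial_spec hLc hLv hL0 hξ
    obtain ⟨hKpos', hKiff'⟩ := radial_spec hKc hKv hK0 hξ'
    obtain ⟨hLpos', hLiff'⟩ := radial_spec hLc hLv hL0 hξ'
    have key : ∀ r : ℝ, 0 < r →
        (radial L ξ < r ∧ r ≤ radial K ξ ↔ radial K (-ξ) < r ∧ r ≤ radial L (-ξ)) := by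
      intro r hr
      have hm := Set.ext_iff.mp h (r • ξ)
      simp only [Set.mem_diff, Set.mem_neg, ← smul_neg] at hm
      rw [hKiff r hr, hLiff r hr, hKiff' r hr, hLiff' r hr] at hm
      simp only [not_le] at hm ⊢
      tauto
    have key' : ∀ r : ℝ, 0 < r →
        (radial L (-ξ) < r ∧ r ≤ radial K (-ξ) ↔ radial K ξ < r ∧ r ≤ radial L ξ) := by
      intro r hr
      have hm := Set.ext_iff.mp h (r • (-ξ))
      simp only [Set.mem_diff, Set.mem_neg, ← smul_neg, neg_neg] at hm
      rw [hKiff' r hr, hLiff' r hr, hKiff r hr, hLiff r hr] at hm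
      simp only [not_le] at hm ⊢
      tauto
    have D1 := interval_dichotomy hLpos hKpos hKpos' hLpos' key
    have D2 := interval_dichotomy hLpos' hKpos' hKpos hLpos key'
    rw [Set.pair_eq_pair_iff]
    rcases D1 with ⟨d1, d2⟩ | ⟨d1, d2⟩
    · rcases D2 with ⟨e1, e2⟩ | ⟨e1, e2⟩
      · left; constructor <;> linarith
      · right; constructor <;> linarith
    · right; constructor <;> linarith
  · intro h
    ext x
    by_cases hx : x = 0
    · subst hx
      simp [Set.mem_diff, Set.mem_neg, interior_subset hK0, interior_subset hL0]
    · have hr : (0 : ℝ) < ‖x‖ := norm_pos_iff.mpr hx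
      set r : ℝ := ‖x‖ with hrdef
      set ξ : EuclideanSpace ℝ (Fin n) := ‖x‖⁻¹ • x with hξdef
      have hξ : ‖ξ‖ = 1 := by
        rw [hξdef, norm_smul, Real.norm_eq_abs, abs_of_pos (inv_pos.mpr hr),
          inv_mul_cancel₀ (ne_of_gt hr)]
      have hξ' : ‖-ξ‖ = 1 := by rwa [norm_neg]
      have hx1 : r • ξ = x := by rw [hξdef, hrdef, smul_inv_smul₀ (ne_of_gt hr)]
      have hx2 : r • (-ξ) = -x := by rw [smul_neg, hx1]
      obtain ⟨hKpos, hKiff⟩ := radial_spec hKc hKv hK0 hξ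
      obtain ⟨hLpos, hLiff⟩ := radial_spec hLc hLv hL0 hξ
      obtain ⟨hKpos', hKiff'⟩ := radial_spec hKc hKv hK0 hξ'
      obtain ⟨hLpos', hLiff'⟩ := radial_spec hLc hLv hL0 hξ'
      have mK : x ∈ K ↔ r ≤ radial K ξ := by rw [← hx1]; exact hKiff r hr
      have mL : x ∈ L ↔ r ≤ radial L ξ := by rw [← hx1]; exact hLiff r hr
      have mK' : -x ∈ K ↔ r ≤ radial K (-ξ) := by rw [← hx2]; exact hKiff' r hr
      have mL' : -x ∈ L ↔ r ≤ radial L (-ξ) := by rw [← hx2]; exact hLiff' r hr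
      rcases Set.pair_eq_pair_iff.mp (h ξ hξ) with ⟨h1, h2⟩ | ⟨h1, h2⟩ <;>
        simp only [Set.mem_diff, Set.mem_neg, mK, mL, mK', mL', not_le] <;>
        (constructor <;> rintro ⟨h3, h4⟩ <;> constructor <;> linarith)
end

section
/- Let K and L be convex bodies in ℝⁿ containing the origin in their interiors. If for every unit vector ξ the unordered pairs {h_K(ξ), h_K(−ξ)} and {h_L(ξ), h_L(−ξ)} coincide, then K \ L = −(L \ K). -/
open Set

/-- The support function of `K`: `h_K(x) = sup {⟨x, y⟩ : y ∈ K}`. -/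
noncomputable def supp {n : ℕ} (K : Set (EuclideanSpace ℝ (Fin n)))
    (x : EuclideanSpace ℝ (Fin n)) : ℝ :=
  sSup ((fun y => (inner ℝ x y : ℝ)) '' K)

open Bornology

/-!
Homogeneity of support functions extends the hypothesis from unit vectors to all of `ℝⁿ`.
If `x ∈ K \ L`, a direction `ξ` separating `x` from `L` has `h_K ξ ≠ h_L ξ`, so the pairs match
crosswise there, `h_K(-ξ) = h_L ξ < ⟨ξ, x⟩`; hence `-x ∉ K`. If moreover `-x ∉ L`, a direction `η`
separating `-x` from `L` gives `h_K(-η) = h_L(-η) < ⟨η, x⟩` as well. The odd part `h_L u - h_L(-u)`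
is negative at `ξ` and positive at `η`, so it vanishes at some `z` of the segment `[ξ, η]`, where
the pairs force `h_K z = h_K(-z)`. But `{u | h_K(-u) < ⟨u, x⟩}` is convex and contains `ξ` and `η`,
so `⟨z, x⟩ ≤ h_K z = h_K(-z) < ⟨z, x⟩`.
-/

lemma exists_mem_segment_apply_eq_apply_neg {E : Type*} [NormedAddCommGroup E] [NormedSpace ℝ E]
    {f : E → ℝ} (hf : Continuous f) {ξ η : E} (hξ : f ξ ≤ f (-ξ)) (hη : f (-η) ≤ f η) :
    ∃ z ∈ segment ℝ ξ η, f z = f (-z) := by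
  obtain ⟨z, hz, hfz⟩ := (convex_segment ξ η).isPreconnected.intermediate_value
    (left_mem_segment ℝ ξ η) (right_mem_segment ℝ ξ η)
    (hf.sub (hf.comp continuous_neg)).continuousOn ⟨sub_nonpos.2 hξ, sub_nonneg.2 hη⟩
  exact ⟨z, hz, sub_eq_zero.1 hfz⟩

section SupportFunction

variable {n : ℕ} {K L : Set (EuclideanSpace ℝ (Fin n))} {x : EuclideanSpace ℝ (Fin n)}

lemma inner_le_supp (hK : IsBounded K) {y : EuclideanSpace ℝ (Fin n)} (hy : y ∈ K)
    (x : EuclideanSpace ℝ (Fin n)) : inner ℝ x y ≤ supp K x :=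
  le_csSup ((innerSL ℝ x).lipschitz.isBounded_image hK).bddAbove ⟨y, hy, rfl⟩

lemma supp_le (hne : K.Nonempty) {c : ℝ} (hc : ∀ y ∈ K, inner ℝ x y ≤ c) : supp K x ≤ c :=
  csSup_le (hne.image _) (forall_mem_image.2 hc)

lemma supp_smul {c : ℝ} (hc : 0 ≤ c) (x : EuclideanSpace ℝ (Fin n)) :
    supp K (c • x) = c * supp K x := by
  rw [supp, supp, ← smul_eq_mul, ← Real.sSup_smul_of_nonneg hc, ← image_smul, image_image]
  simp only [real_inner_smul_left, smul_eq_mul]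

lemma supp_zero : supp K 0 = 0 := by
  simpa using supp_smul (K := K) le_rfl 0

lemma convexOn_supp (hK : IsBounded K) (hne : K.Nonempty) : ConvexOn ℝ univ (supp K) := by
  refine ⟨convex_univ, fun u _ v _ a b ha hb _ => supp_le hne fun y hy => ?_⟩
  rw [inner_add_left, real_inner_smul_left, real_inner_smul_left, smul_eq_mul, smul_eq_mul]
  gcongr <;> exact inner_le_supp hK hy _

lemma continuous_supp (hK : IsBounded K) : Continuous (supp K) := by
  rcases K.eq_empty_or_nonempty with rfl | hne
  · exact (continuous_const (y := (0 : ℝ))).congr fun u => by simp [supp]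
  · exact (convexOn_supp hK hne).locallyLipschitz.continuous

lemma convex_setOf_supp_neg_lt_inner (hK : IsBounded K) (hne : K.Nonempty)
    (x : EuclideanSpace ℝ (Fin n)) : Convex ℝ {u | supp K (-u) < inner ℝ u x} := by
  have hneg : ConvexOn ℝ univ fun u => supp K (-u) :=
    (convexOn_supp hK hne).comp_linearMap (-LinearMap.id)
  have hconv : ConvexOn ℝ univ fun u => supp K (-u) - inner ℝ u x :=
    hneg.sub (((innerₛₗ ℝ).flip x).concaveOn convex_univ)
  simpa only [mem_univ, true_and, sub_neg] using hconv.convex_lt 0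

lemma exists_supp_lt_inner (hLc : IsClosed L) (hLv : Convex ℝ L) (hne : L.Nonempty)
    (hx : x ∉ L) : ∃ ξ, supp L ξ < inner ℝ ξ x := by
  obtain ⟨f, u, hfu, hux⟩ := geometric_hahn_banach_closed_point hLv hLc hx
  refine ⟨(InnerProductSpace.toDual ℝ _).symm f, ?_⟩
  simp only [InnerProductSpace.toDual_symm_apply]
  exact (supp_le hne fun y hy => by
    simpa only [InnerProductSpace.toDual_symm_apply] using (hfu y hy).le).trans_lt hux

lemma supp_pair_eq_of_forall_norm_eq_one
    (h : ∀ ξ : EuclideanSpace ℝ (Fin n), ‖ξ‖ = 1 →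
      ({supp K ξ, supp K (-ξ)} : Set ℝ) = {supp L ξ, supp L (-ξ)})
    (ξ : EuclideanSpace ℝ (Fin n)) :
    ({supp K ξ, supp K (-ξ)} : Set ℝ) = {supp L ξ, supp L (-ξ)} := by
  rcases eq_or_ne ξ 0 with rfl | hξ
  · simp only [neg_zero, supp_zero]
  have hu : ‖‖ξ‖⁻¹ • ξ‖ = 1 := norm_smul_inv_norm hξ
  have hscale : ∀ M : Set (EuclideanSpace ℝ (Fin n)), ({supp M ξ, supp M (-ξ)} : Set ℝ) =
      (‖ξ‖ * ·) '' {supp M (‖ξ‖⁻¹ • ξ), supp M (-(‖ξ‖⁻¹ • ξ))} := fun M => by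
    rw [image_pair, ← supp_smul (norm_nonneg ξ), ← supp_smul (norm_nonneg ξ), smul_neg,
      smul_inv_smul₀ (norm_ne_zero_iff.2 hξ)]
  rw [hscale K, hscale L, h _ hu]

lemma neg_notMem_of_mem_diff (hK : IsBounded K) (hLc : IsClosed L) (hLv : Convex ℝ L)
    (hLne : L.Nonempty)
    (h : ∀ ξ, ({supp K ξ, supp K (-ξ)} : Set ℝ) = {supp L ξ, supp L (-ξ)})
    (hxK : x ∈ K) (hxL : x ∉ L) : -x ∉ K := by
  intro hnx
  obtain ⟨ξ, hξ⟩ := exists_supp_lt_inner hLc hLv hLne hxL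
  have hxξ := inner_le_supp hK hxK ξ
  have hnxξ := inner_le_supp hK hnx (-ξ)
  rw [inner_neg_neg] at hnxξ
  rcases pair_eq_pair_iff.1 (h ξ) with ⟨hKL, -⟩ | ⟨-, hKL⟩ <;> linarith

lemma neg_mem_of_mem_diff (hK : IsBounded K) (hL : IsBounded L) (hLc : IsClosed L)
    (hLv : Convex ℝ L) (hLne : L.Nonempty)
    (h : ∀ ξ, ({supp K ξ, supp K (-ξ)} : Set ℝ) = {supp L ξ, supp L (-ξ)})
    (hxK : x ∈ K) (hxL : x ∉ L) : -x ∈ L := by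
  by_contra hnx
  obtain ⟨ξ, hξ⟩ := exists_supp_lt_inner hLc hLv hLne hxL
  obtain ⟨η, hη⟩ : ∃ η, supp L (-η) < inner ℝ η x := by
    obtain ⟨η, hη⟩ := exists_supp_lt_inner hLc hLv hLne hnx
    exact ⟨-η, by rwa [neg_neg, inner_neg_left, ← inner_neg_right]⟩
  have hxξ := inner_le_supp hK hxK ξ
  have hxη := inner_le_supp hK hxK η
  obtain ⟨hKξ, hKnξ⟩ : supp K ξ = supp L (-ξ) ∧ supp K (-ξ) = supp L ξ := by
    rcases pair_eq_pair_iff.1 (h ξ) with ⟨hKL, -⟩ | hKL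
    · linarith
    · exact hKL
  obtain ⟨hKη, hKnη⟩ : supp K η = supp L η ∧ supp K (-η) = supp L (-η) := by
    rcases pair_eq_pair_iff.1 (h η) with hKL | ⟨hKL, -⟩
    · exact hKL
    · linarith
  obtain ⟨z, hz, hLz⟩ := exists_mem_segment_apply_eq_apply_neg (continuous_supp hL)
    (by linarith : supp L ξ ≤ supp L (-ξ)) (by linarith : supp L (-η) ≤ supp L η)
  have hKz : supp K z = supp K (-z) := by
    rcases pair_eq_pair_iff.1 (h z) with ⟨h₁, h₂⟩ | ⟨h₁, h₂⟩ <;> linarith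
  have hz_lt : supp K (-z) < inner ℝ z x :=
    (convex_setOf_supp_neg_lt_inner hK ⟨x, hxK⟩ x).segment_subset
      (by simp only [mem_ofPred_eq]; linarith) (by simp only [mem_ofPred_eq]; linarith) hz
  linarith [inner_le_supp hK hxK z]

end SupportFunction

theorem support_pairs_eq_imp_diff_symm {n : ℕ} (K L : Set (EuclideanSpace ℝ (Fin n)))
    (hKc : IsCompact K) (hKv : Convex ℝ K)
    (hK0 : (0 : EuclideanSpace ℝ (Fin n)) ∈ interior K)
    (hLc : IsCompact L) (hLv : Convex ℝ L)
    (hL0 : (0 : EuclideanSpace ℝ (Fin n)) ∈ interior L)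
    (h : ∀ ξ : EuclideanSpace ℝ (Fin n), ‖ξ‖ = 1 →
      ({supp K ξ, supp K (-ξ)} : Set ℝ) = {supp L ξ, supp L (-ξ)}) :
    K \ L = -(L \ K) := by
  have hKne : K.Nonempty := ⟨0, interior_subset hK0⟩
  have hLne : L.Nonempty := ⟨0, interior_subset hL0⟩
  have hKL := supp_pair_eq_of_forall_norm_eq_one h
  have hLK := fun ξ => (hKL ξ).symm
  ext x
  simp only [mem_sdiff, mem_neg]
  constructor
  · rintro ⟨hxK, hxL⟩
    exact ⟨neg_mem_of_mem_diff hKc.isBounded hLc.isBounded hLc.isClosed hLv hLne hKL hxK hxL,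
      neg_notMem_of_mem_diff hKc.isBounded hLc.isClosed hLv hLne hKL hxK hxL⟩
  · rintro ⟨hxL, hxK⟩
    have hnxK := neg_mem_of_mem_diff hLc.isBounded hKc.isBounded hKc.isClosed hKv hKne hLK hxL hxK
    have hnxL := neg_notMem_of_mem_diff hLc.isBounded hKc.isClosed hKv hKne hLK hxL hxK
    rw [neg_neg] at hnxK hnxL
    exact ⟨hnxK, hnxL⟩
end
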